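/- (Fixed-horizon policy as a special case with zero terminal value.) In a finite discounted MDP, let M̂ be an approximate transition model with D_TV(p(·|s,a), M̂(·|s,a)) ≤ ε_m for all (s,a) ∈ S×A and let 0 ≤ r(s,a) ≤ Rmax for all (s,a). Fix a horizon H ≥ 1, take V̂ ≡ 0, and let W : S → ℝ be the value of the H-step lookahead policy π_{H,0} (the fixed-horizon planning policy with no terminal value function, for any choice of maximizers π^s). Then for every state s0, V*(s0) − W(s0) ≤ (2/(1−γ^H))·[Rmax·Σ_{t=0}^{H−1} γ^t·t·ε_m + γ^H·sup_{s∈S} V*(s)]. -/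

import Mathlib

/-!
Splitting any policy's value after `H` steps bounds it by its `H`-step return plus `γ^H V*`.
Replacing the true model by `M̂` moves the law of the state at time `t` by at most `2 t ε_m` in
`ℓ¹` (one TV step per transition), hence an `H`-step return by at most `E = R_max ∑ γ^t t ε_m`;
since the planner maximizes the `M̂`-return, its true return is within twice that of every
policy's. With `W = (H-step return of π^s) + γ^H 𝔼[W]` and `V* ≥ 0`, the gap `Δ = V* - W`
satisfies `Δ(s) ≤ 2E + γ^H sup V* + γ^H 𝔼[Δ]`, and evaluating at a maximizer of `Δ` gives
`Δ ≤ (2E + γ^H sup V*) / (1 - γ^H)`.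
-/

/-- State distribution at time `t` of a (possibly non-stationary) deterministic policy `π`
started from `s0`, under transition model `N`. -/
noncomputable def stateDist {S A : Type*} [Fintype S] [DecidableEq S]
    (N : S → A → S → ℝ) (π : ℕ → S → A) (s0 : S) : ℕ → S → ℝ
  | 0 => fun s => if s = s0 then 1 else 0
  | t + 1 => fun s' => ∑ s : S, stateDist N π s0 t s * N s (π t s) s'

/-- Discounted value of a (possibly non-stationary) deterministic policy. -/
noncomputable def value {S A : Type*} [Fintype S] [DecidableEq S]
    (p : S → A → S → ℝ) (r : S → A → ℝ) (γ : ℝ) (π : ℕ → S → A) (s0 : S) : ℝ :=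
  ∑' t : ℕ, γ ^ t * ∑ s : S, stateDist p π s0 t s * r s (π t s)

/-- Optimal value function: supremum of values over all deterministic policies. -/
noncomputable def vStar {S A : Type*} [Fintype S] [DecidableEq S]
    (p : S → A → S → ℝ) (r : S → A → ℝ) (γ : ℝ) (s0 : S) : ℝ :=
  ⨆ π : ℕ → S → A, value p r γ π s0

/-- H-step lookahead objective of an H-step policy `π` (only its first `H` maps are used),
under transition model `N`, with terminal value function `Vhat`. -/
noncomputable def lookahead {S A : Type*} [Fintype S] [DecidableEq S]
    (N : S → A → S → ℝ) (r : S → A → ℝ) (γ : ℝ) (Vhat : S → ℝ) (H : ℕ)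
    (π : ℕ → S → A) (s : S) : ℝ :=
  (∑ t ∈ Finset.range H, γ ^ t * ∑ s' : S, stateDist N π s t s' * r s' (π t s')) +
    γ ^ H * ∑ s' : S, stateDist N π s H s' * Vhat s'


open Finset

structure IsTransitionModel {S A : Type*} [Fintype S] (p : S → A → S → ℝ) : Prop where
  nonneg : ∀ s a s', 0 ≤ p s a s'
  sum_eq_one : ∀ s a, ∑ s', p s a s' = 1

section Trajectory

variable {S A : Type*} [Fintype S] [DecidableEq S]

noncomputable def discountedReward (N : S → A → S → ℝ) (r : S → A → ℝ) (γ : ℝ)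
    (π : ℕ → S → A) (s0 : S) (t : ℕ) : ℝ :=
  γ ^ t * ∑ s, stateDist N π s0 t s * r s (π t s)

noncomputable def horizonReturn (N : S → A → S → ℝ) (r : S → A → ℝ) (γ : ℝ) (H : ℕ)
    (π : ℕ → S → A) (s0 : S) : ℝ :=
  ∑ t ∈ range H, discountedReward N r γ π s0 t

theorem value_eq_tsum_discountedReward (p : S → A → S → ℝ) (r : S → A → ℝ) (γ : ℝ)
    (π : ℕ → S → A) (s0 : S) : value p r γ π s0 = ∑' t, discountedReward p r γ π s0 t :=
  rfl

theorem lookahead_zero (N : S → A → S → ℝ) (r : S → A → ℝ) (γ : ℝ) (H : ℕ)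
    (π : ℕ → S → A) (s : S) : lookahead N r γ (fun _ => 0) H π s = horizonReturn N r γ H π s := by
  simp [lookahead, horizonReturn, discountedReward]

theorem stateDist_nonneg {N : S → A → S → ℝ} (hN : IsTransitionModel N) (π : ℕ → S → A)
    (s0 : S) (t : ℕ) (s : S) : 0 ≤ stateDist N π s0 t s := by
  induction t generalizing s with
  | zero => simp only [stateDist]; split <;> norm_num
  | succ t ih => exact sum_nonneg fun s' _ => mul_nonneg (ih s') (hN.nonneg _ _ _)

theorem sum_stateDist {N : S → A → S → ℝ} (hN : IsTransitionModel N) (π : ℕ → S → A)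
    (s0 : S) (t : ℕ) : ∑ s, stateDist N π s0 t s = 1 := by
  induction t with
  | zero => simp [stateDist]
  | succ t ih =>
    simp only [stateDist]
    rw [sum_comm]
    simp only [← mul_sum, hN.sum_eq_one, mul_one, ih]

theorem stateDist_add (N : S → A → S → ℝ) (π : ℕ → S → A) (s0 : S) (H k : ℕ) (s : S) :
    stateDist N π s0 (H + k) s =
      ∑ s', stateDist N π s0 H s' * stateDist N (fun t => π (H + t)) s' k s := by
  induction k generalizing s with
  | zero => simp [stateDist]
  | succ k ih =>
    rw [← add_assoc]
    simp only [stateDist, ih, sum_mul, mul_sum]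
    rw [sum_comm]
    simp only [mul_assoc]

theorem discountedReward_add (N : S → A → S → ℝ) (r : S → A → ℝ) (γ : ℝ) (π : ℕ → S → A)
    (s0 : S) (H t : ℕ) :
    discountedReward N r γ π s0 (H + t) =
      γ ^ H * ∑ s', stateDist N π s0 H s' * discountedReward N r γ (fun u => π (H + u)) s' t := by
  simp only [discountedReward, stateDist_add N π s0 H t, sum_mul, mul_sum]
  rw [sum_comm]
  exact sum_congr rfl fun _ _ => sum_congr rfl fun _ _ => by ring

end Trajectory

section BoundedRewards

variable {S A : Type*} [Fintype S] [DecidableEq S] {p : S → A → S → ℝ} {r : S → A → ℝ}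
  {γ Rmax : ℝ}

theorem discountedReward_nonneg (hp : IsTransitionModel p) (hγ0 : 0 ≤ γ) (hr0 : ∀ s a, 0 ≤ r s a)
    (π : ℕ → S → A) (s0 : S) (t : ℕ) : 0 ≤ discountedReward p r γ π s0 t :=
  mul_nonneg (pow_nonneg hγ0 t)
    (sum_nonneg fun s _ => mul_nonneg (stateDist_nonneg hp π s0 t s) (hr0 _ _))

theorem discountedReward_le (hp : IsTransitionModel p) (hγ0 : 0 ≤ γ)
    (hrmax : ∀ s a, r s a ≤ Rmax) (π : ℕ → S → A) (s0 : S) (t : ℕ) :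
    discountedReward p r γ π s0 t ≤ γ ^ t * Rmax := by
  refine mul_le_mul_of_nonneg_left ?_ (pow_nonneg hγ0 t)
  calc ∑ s, stateDist p π s0 t s * r s (π t s)
      ≤ ∑ s, stateDist p π s0 t s * Rmax :=
        sum_le_sum fun s _ => mul_le_mul_of_nonneg_left (hrmax _ _) (stateDist_nonneg hp π s0 t s)
    _ = Rmax := by rw [← sum_mul, sum_stateDist hp, one_mul]

theorem vStar_nonneg (hp : IsTransitionModel p) (hγ0 : 0 ≤ γ) (hr0 : ∀ s a, 0 ≤ r s a) (s0 : S) :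
    0 ≤ vStar p r γ s0 :=
  Real.iSup_nonneg fun π => tsum_nonneg (discountedReward_nonneg hp hγ0 hr0 π s0)

variable (hp : IsTransitionModel p) (hγ0 : 0 ≤ γ) (hγ1 : γ < 1) (hr0 : ∀ s a, 0 ≤ r s a)
  (hrmax : ∀ s a, r s a ≤ Rmax)
include hp hγ0 hγ1 hr0 hrmax

theorem summable_discountedReward (π : ℕ → S → A) (s0 : S) :
    Summable (discountedReward p r γ π s0) :=
  .of_nonneg_of_le (discountedReward_nonneg hp hγ0 hr0 π s0) (discountedReward_le hp hγ0 hrmax π s0)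
    ((summable_geometric_of_lt_one hγ0 hγ1).mul_right Rmax)

theorem value_le (π : ℕ → S → A) (s0 : S) : value p r γ π s0 ≤ (1 - γ)⁻¹ * Rmax := by
  rw [value_eq_tsum_discountedReward, ← tsum_geometric_of_lt_one hγ0 hγ1, ← tsum_mul_right]
  exact (summable_discountedReward hp hγ0 hγ1 hr0 hrmax π s0).tsum_le_tsum
    (discountedReward_le hp hγ0 hrmax π s0) ((summable_geometric_of_lt_one hγ0 hγ1).mul_right Rmax)

theorem value_le_vStar (π : ℕ → S → A) (s0 : S) : value p r γ π s0 ≤ vStar p r γ s0 :=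
  le_ciSup ⟨(1 - γ)⁻¹ * Rmax, Set.forall_mem_range.2 fun π => value_le hp hγ0 hγ1 hr0 hrmax π s0⟩ π

theorem value_eq_horizonReturn_add (H : ℕ) (π : ℕ → S → A) (s0 : S) :
    value p r γ π s0 = horizonReturn p r γ H π s0 +
      γ ^ H * ∑ s, stateDist p π s0 H s * value p r γ (fun t => π (H + t)) s := by
  rw [value_eq_tsum_discountedReward,
    ← (summable_discountedReward hp hγ0 hγ1 hr0 hrmax π s0).sum_add_tsum_nat_add H]
  congr 1
  simp_rw [add_comm _ H, discountedReward_add, tsum_mul_left]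
  rw [Summable.tsum_finsetSum fun s _ =>
    (summable_discountedReward hp hγ0 hγ1 hr0 hrmax _ s).mul_left _]
  simp_rw [tsum_mul_left]
  rfl

theorem value_le_horizonReturn_add {V : ℝ} (hV : ∀ s, vStar p r γ s ≤ V) (H : ℕ)
    (π : ℕ → S → A) (s0 : S) :
    value p r γ π s0 ≤ horizonReturn p r γ H π s0 + γ ^ H * V := by
  rw [value_eq_horizonReturn_add hp hγ0 hγ1 hr0 hrmax H]
  gcongr
  calc ∑ s, stateDist p π s0 H s * value p r γ (fun t => π (H + t)) s
      ≤ ∑ s, stateDist p π s0 H s * V := by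
        gcongr with s
        · exact stateDist_nonneg hp π s0 H s
        · exact (value_le_vStar hp hγ0 hγ1 hr0 hrmax _ s).trans (hV s)
    _ = V := by rw [← sum_mul, sum_stateDist hp, one_mul]

end BoundedRewards

theorem abs_sum_sub_mul_le_of_sum_eq {ι : Type*} [Fintype ι] {μ ν f : ι → ℝ} {R : ℝ}
    (hsum : ∑ i, μ i = ∑ i, ν i) (hf0 : ∀ i, 0 ≤ f i) (hfR : ∀ i, f i ≤ R) :
    |∑ i, (μ i - ν i) * f i| ≤ R / 2 * ∑ i, |μ i - ν i| := by
  -- centring `f` at `R / 2` costs nothing because `μ` and `ν` have the same mass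
  have hcentre : ∑ i, (μ i - ν i) * f i = ∑ i, (μ i - ν i) * (f i - R / 2) := by
    simp only [mul_sub, sum_sub_distrib, ← sum_mul, hsum, sub_self, zero_mul, sub_zero]
  rw [hcentre, mul_sum]
  refine (abs_sum_le_sum_abs _ _).trans (sum_le_sum fun i _ => ?_)
  rw [abs_mul, mul_comm]
  gcongr
  exact abs_sub_le_iff.2 ⟨by linarith [hfR i], by linarith [hf0 i]⟩

section ModelError

variable {S A : Type*} [Fintype S] [DecidableEq S] {p M : S → A → S → ℝ} {r : S → A → ℝ}
  {γ Rmax εm : ℝ}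

theorem sum_abs_stateDist_sub_le (hp : IsTransitionModel p) (hM : IsTransitionModel M) {δ : ℝ}
    (hδ : ∀ s a, ∑ s', |p s a s' - M s a s'| ≤ δ) (π : ℕ → S → A) (s0 : S) (t : ℕ) :
    ∑ s, |stateDist p π s0 t s - stateDist M π s0 t s| ≤ t * δ := by
  induction t with
  | zero => simp [stateDist]
  | succ t ih =>
    set dp := stateDist p π s0 t
    set dM := stateDist M π s0 t
    have hstep : ∀ s', |stateDist p π s0 (t + 1) s' - stateDist M π s0 (t + 1) s'| ≤
        ∑ s, (|dp s - dM s| * p s (π t s) s' + dM s * |p s (π t s) s' - M s (π t s) s'|) := by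
      intro s'
      have hsplit : stateDist p π s0 (t + 1) s' - stateDist M π s0 (t + 1) s' =
          ∑ s, ((dp s - dM s) * p s (π t s) s' + dM s * (p s (π t s) s' - M s (π t s) s')) := by
        simp only [stateDist, ← sum_sub_distrib]
        exact sum_congr rfl fun _ _ => by ring
      rw [hsplit]
      refine (abs_sum_le_sum_abs _ _).trans (sum_le_sum fun s _ => (abs_add_le _ _).trans ?_)
      rw [abs_mul, abs_mul, abs_of_nonneg (hp.nonneg _ _ _),
        abs_of_nonneg (stateDist_nonneg hM π s0 t s)]
    calc ∑ s', |stateDist p π s0 (t + 1) s' - stateDist M π s0 (t + 1) s'|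
        ≤ ∑ s', ∑ s, (|dp s - dM s| * p s (π t s) s' + dM s * |p s (π t s) s' - M s (π t s) s'|) :=
          sum_le_sum fun s' _ => hstep s'
      _ = ∑ s, |dp s - dM s| * ∑ s', p s (π t s) s' +
            ∑ s, dM s * ∑ s', |p s (π t s) s' - M s (π t s) s'| := by
          rw [sum_comm]
          simp only [sum_add_distrib, mul_sum]
      _ ≤ t * δ + ∑ s, dM s * δ := by
          simp only [hp.sum_eq_one, mul_one]
          gcongr with s
          · exact stateDist_nonneg hM π s0 t s
          · exact hδ _ _
      _ = (t + 1 : ℕ) * δ := by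
          rw [← sum_mul, sum_stateDist hM, one_mul]
          push_cast
          ring

theorem abs_horizonReturn_sub_le (hp : IsTransitionModel p) (hM : IsTransitionModel M)
    (hγ0 : 0 ≤ γ) (hr0 : ∀ s a, 0 ≤ r s a) (hrmax : ∀ s a, r s a ≤ Rmax)
    (hTV : ∀ s a, ∑ s', |p s a s' - M s a s'| ≤ 2 * εm) (H : ℕ) (π : ℕ → S → A) (s0 : S) :
    |horizonReturn p r γ H π s0 - horizonReturn M r γ H π s0| ≤
      Rmax * ∑ t ∈ range H, γ ^ t * t * εm := by
  rw [horizonReturn, horizonReturn, ← sum_sub_distrib, mul_sum]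
  refine (abs_sum_le_sum_abs _ _).trans (sum_le_sum fun t _ => ?_)
  have hdiff : discountedReward p r γ π s0 t - discountedReward M r γ π s0 t =
      γ ^ t * ∑ s, (stateDist p π s0 t s - stateDist M π s0 t s) * r s (π t s) := by
    simp only [discountedReward, ← mul_sub, ← sum_sub_distrib, sub_mul]
  have hmass : ∑ s, stateDist p π s0 t s = ∑ s, stateDist M π s0 t s := by
    rw [sum_stateDist hp, sum_stateDist hM]
  calc |discountedReward p r γ π s0 t - discountedReward M r γ π s0 t|
      ≤ γ ^ t * (Rmax / 2 * ∑ s, |stateDist p π s0 t s - stateDist M π s0 t s|) := by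
        rw [hdiff, abs_mul, abs_of_nonneg (pow_nonneg hγ0 t)]
        gcongr
        exact abs_sum_sub_mul_le_of_sum_eq hmass (fun s => hr0 _ _) (fun s => hrmax _ _)
    _ ≤ γ ^ t * (Rmax / 2 * (t * (2 * εm))) := by
        have hRmax : 0 ≤ Rmax := (hr0 s0 (π 0 s0)).trans (hrmax _ _)
        gcongr
        exact sum_abs_stateDist_sub_le hp hM hTV π s0 t
    _ = Rmax * (γ ^ t * t * εm) := by ring

theorem vStar_le_horizonReturn_of_isMaxOn (hp : IsTransitionModel p) (hM : IsTransitionModel M)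
    (hγ0 : 0 ≤ γ) (hγ1 : γ < 1) (hr0 : ∀ s a, 0 ≤ r s a) (hrmax : ∀ s a, r s a ≤ Rmax)
    (hTV : ∀ s a, ∑ s', |p s a s' - M s a s'| ≤ 2 * εm) {V : ℝ} (hV : ∀ s, vStar p r γ s ≤ V)
    (H : ℕ) (π' : ℕ → S → A) (s : S)
    (hmax : ∀ π, lookahead M r γ (fun _ => 0) H π s ≤ lookahead M r γ (fun _ => 0) H π' s) :
    vStar p r γ s ≤
      horizonReturn p r γ H π' s + 2 * (Rmax * ∑ t ∈ range H, γ ^ t * t * εm) + γ ^ H * V := by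
  have : Nonempty (ℕ → S → A) := ⟨π'⟩
  refine ciSup_le fun π => ?_
  have hvalue := value_le_horizonReturn_add hp hγ0 hγ1 hr0 hrmax hV H π s
  have herr := abs_le.1 (abs_horizonReturn_sub_le hp hM hγ0 hr0 hrmax hTV H π s)
  have herr' := abs_le.1 (abs_horizonReturn_sub_le hp hM hγ0 hr0 hrmax hTV H π' s)
  have hopt := hmax π
  rw [lookahead_zero, lookahead_zero] at hopt
  linarith [herr.2, herr'.1]

theorem vStar_sub_le_of_isMaxOn (hp : IsTransitionModel p) (hM : IsTransitionModel M)
    (hγ0 : 0 ≤ γ) (hγ1 : γ < 1) (hr0 : ∀ s a, 0 ≤ r s a) (hrmax : ∀ s a, r s a ≤ Rmax)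
    (hTV : ∀ s a, ∑ s', |p s a s' - M s a s'| ≤ 2 * εm) {V : ℝ} (hV : ∀ s, vStar p r γ s ≤ V)
    (H : ℕ) (π' : ℕ → S → A) (s : S)
    (hmax : ∀ π, lookahead M r γ (fun _ => 0) H π s ≤ lookahead M r γ (fun _ => 0) H π' s)
    (W : S → ℝ)
    (hW : W s = horizonReturn p r γ H π' s + γ ^ H * ∑ s', stateDist p π' s H s' * W s') :
    vStar p r γ s - W s ≤ (2 * (Rmax * ∑ t ∈ range H, γ ^ t * t * εm) + γ ^ H * V) +
      γ ^ H * ∑ s', stateDist p π' s H s' * (vStar p r γ s' - W s') := by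
  have hstar := vStar_le_horizonReturn_of_isMaxOn hp hM hγ0 hγ1 hr0 hrmax hTV hV H π' s hmax
  -- `V* ≥ 0` lets the unknown tail `-γ^H 𝔼[W]` be absorbed into `γ^H 𝔼[V* - W]`
  have htail : 0 ≤ γ ^ H * ∑ s', stateDist p π' s H s' * vStar p r γ s' :=
    mul_nonneg (pow_nonneg hγ0 H) (sum_nonneg fun s' _ =>
      mul_nonneg (stateDist_nonneg hp π' s H s') (vStar_nonneg hp hγ0 hr0 s'))
  simp only [mul_sub, sum_sub_distrib]
  linarith

end ModelError

theorem le_div_one_sub_of_le_add_mul_sum {ι : Type*} [Fintype ι] {f : ι → ℝ} {μ : ι → ι → ℝ}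
    {β c : ℝ} (hμ0 : ∀ i j, 0 ≤ μ i j) (hμ1 : ∀ i, ∑ j, μ i j = 1) (hβ0 : 0 ≤ β) (hβ1 : β < 1)
    (hf : ∀ i, f i ≤ c + β * ∑ j, μ i j * f j) (i : ι) :
    f i ≤ c / (1 - β) := by
  have : Nonempty ι := ⟨i⟩
  obtain ⟨k, hk⟩ := Finite.exists_max f
  have hmean : ∑ j, μ k j * f j ≤ f k :=
    calc ∑ j, μ k j * f j ≤ ∑ j, μ k j * f k :=
          sum_le_sum fun j _ => mul_le_mul_of_nonneg_left (hk j) (hμ0 k j)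
      _ = f k := by rw [← sum_mul, hμ1, one_mul]
  have hfk : f k * (1 - β) ≤ c := by nlinarith [hf k]
  exact (hk i).trans ((le_div_iff₀ (by linarith)).2 hfk)

theorem fixed_horizon_policy_bound_general
    {S A : Type*} [Fintype S] [DecidableEq S]
    (p Mhat : S → A → S → ℝ) (r : S → A → ℝ) (γ Rmax εm : ℝ) (H : ℕ)
    (hp_nonneg : ∀ s a s', 0 ≤ p s a s')
    (hp_sum : ∀ s a, ∑ s' : S, p s a s' = 1)
    (hM_nonneg : ∀ s a s', 0 ≤ Mhat s a s')
    (hM_sum : ∀ s a, ∑ s' : S, Mhat s a s' = 1)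
    (hγ0 : 0 < γ) (hγ1 : γ < 1) (hH : 1 ≤ H)
    (hTV : ∀ s a, (1 / 2) * ∑ s' : S, |p s a s' - Mhat s a s'| ≤ εm)
    (hr0 : ∀ s a, 0 ≤ r s a) (hrmax : ∀ s a, r s a ≤ Rmax)
    -- `W` is the (bounded) value of the H-step lookahead policy with zero terminal value:
    -- for every state `s`, `σ s` maximizes the lookahead objective (with `Vhat ≡ 0`) under
    -- `Mhat`, and `W` satisfies the corresponding fixed-point equation under the true model.
    (W : S → ℝ)
    (σ : S → ℕ → S → A)
    (hσmax : ∀ s (π : ℕ → S → A),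
      lookahead Mhat r γ (fun _ => 0) H π s ≤ lookahead Mhat r γ (fun _ => 0) H (σ s) s)
    (hW : ∀ s, W s =
      (∑ t ∈ Finset.range H, γ ^ t * ∑ s' : S, stateDist p (σ s) s t s' * r s' (σ s t s')) +
        γ ^ H * ∑ s' : S, stateDist p (σ s) s H s' * W s')
    (s0 : S) :
    vStar p r γ s0 - W s0 ≤
      (2 / (1 - γ ^ H)) *
        (Rmax * (∑ t ∈ Finset.range H, γ ^ t * (t : ℝ) * εm) +
          γ ^ H * ⨆ s : S, vStar p r γ s) := by
  set E := Rmax * ∑ t ∈ Finset.range H, γ ^ t * (t : ℝ) * εm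
  set Vmax := ⨆ s : S, vStar p r γ s
  have hp : IsTransitionModel p := ⟨hp_nonneg, hp_sum⟩
  have hM : IsTransitionModel Mhat := ⟨hM_nonneg, hM_sum⟩
  have hL1 : ∀ s a, ∑ s', |p s a s' - Mhat s a s'| ≤ 2 * εm := fun s a => by linarith [hTV s a]
  have hVmax : ∀ s, vStar p r γ s ≤ Vmax := le_ciSup (Set.finite_range _).bddAbove
  have hγH1 : γ ^ H < 1 := pow_lt_one₀ hγ0.le hγ1 (by omega)
  have hgap : ∀ s, vStar p r γ s - W s ≤ (2 * E + γ ^ H * Vmax) +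
      γ ^ H * ∑ s', stateDist p (σ s) s H s' * (vStar p r γ s' - W s') := fun s =>
    vStar_sub_le_of_isMaxOn hp hM hγ0.le hγ1 hr0 hrmax hL1 hVmax H (σ s) s (hσmax s) W (hW s)
  calc vStar p r γ s0 - W s0 ≤ (2 * E + γ ^ H * Vmax) / (1 - γ ^ H) :=
        le_div_one_sub_of_le_add_mul_sum (fun s => stateDist_nonneg hp (σ s) s H)
          (fun s => sum_stateDist hp (σ s) s H) (pow_nonneg hγ0.le H) hγH1 hgap s0
    _ ≤ 2 / (1 - γ ^ H) * (E + γ ^ H * Vmax) := by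
        rw [div_mul_eq_mul_div]
        gcongr
        have hVmax0 : 0 ≤ Vmax := (vStar_nonneg hp hγ0.le hr0 s0).trans (hVmax s0)
        linarith [mul_nonneg (pow_nonneg hγ0.le H) hVmax0]

/-- Performance bound for the fixed-horizon planning policy (H-step lookahead with zero
terminal value function) under an approximate model. -/
theorem fixed_horizon_policy_bound
    {S A : Type*} [Fintype S] [DecidableEq S] [Nonempty S] [Fintype A] [Nonempty A]
    (p Mhat : S → A → S → ℝ) (r : S → A → ℝ) (γ Rmax εm : ℝ) (H : ℕ)
    (hp_nonneg : ∀ s a s', 0 ≤ p s a s')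
    (hp_sum : ∀ s a, ∑ s' : S, p s a s' = 1)
    (hM_nonneg : ∀ s a s', 0 ≤ Mhat s a s')
    (hM_sum : ∀ s a, ∑ s' : S, Mhat s a s' = 1)
    (hγ0 : 0 < γ) (hγ1 : γ < 1) (hH : 1 ≤ H)
    (hTV : ∀ s a, (1 / 2) * ∑ s' : S, |p s a s' - Mhat s a s'| ≤ εm)
    (hr0 : ∀ s a, 0 ≤ r s a) (hrmax : ∀ s a, r s a ≤ Rmax)
    -- `W` is the (bounded) value of the H-step lookahead policy with zero terminal value:
    -- for every state `s`, `σ s` maximizes the lookahead objective (with `Vhat ≡ 0`) under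
    -- `Mhat`, and `W` satisfies the corresponding fixed-point equation under the true model.
    (W : S → ℝ) (hWbdd : ∃ B, ∀ s, |W s| ≤ B)
    (σ : S → ℕ → S → A)
    (hσmax : ∀ s (π : ℕ → S → A),
      lookahead Mhat r γ (fun _ => 0) H π s ≤ lookahead Mhat r γ (fun _ => 0) H (σ s) s)
    (hW : ∀ s, W s =
      (∑ t ∈ Finset.range H, γ ^ t * ∑ s' : S, stateDist p (σ s) s t s' * r s' (σ s t s')) +
        γ ^ H * ∑ s' : S, stateDist p (σ s) s H s' * W s')
    (s0 : S) :
    vStar p r γ s0 - W s0 ≤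
      (2 / (1 - γ ^ H)) *
        (Rmax * (∑ t ∈ Finset.range H, γ ^ t * (t : ℝ) * εm) +
          γ ^ H * ⨆ s : S, vStar p r γ s) :=
  fixed_horizon_policy_bound_general p Mhat r γ Rmax εm H hp_nonneg hp_sum hM_nonneg hM_sum hγ0 hγ1
    hH hTV hr0 hrmax W σ hσmax hW s0
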